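/- Let K be a positive integer, α a real skew-symmetric K×K matrix, and T > 0. Let u: [−T,T] × ℝ → ℝ^K be twice continuously differentiable and 2π-periodic in the second variable θ, and let f: [−T,T] × ℝ → ℝ^K be continuous and 2π-periodic in θ. Assume the pointwise orthogonality ⟨∂_t u, ∂_t² u + ∂_θ² u + 2α·∂_θ u + α²·u − f⟩ = 0 at every point. Define e(t) := ∫₀^{2π} (‖∂_t u(t,θ)‖² − ‖∂_θ u(t,θ) + α·u(t,θ)‖²) dθ. Then for all t ∈ [−T, T]: |e(t) − e(0)| ≤ 2·‖Du‖_{C⁰}·∫_{−|t|}^{|t|} ∫₀^{2π} ‖f(s,θ)‖ dθ ds, where ‖Du‖_{C⁰} := sup over [−T,T]×ℝ of (‖∂_t u‖² + ‖∂_θ u + α·u‖²)^{1/2}. -/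

import Mathlib

/-!
Write `A = ∂ₜu` and `B = ∂_θu + αu`. Skew-symmetry of `α` and the symmetry of mixed partials give
the pointwise identity `∂ₜ(‖A‖² - ‖B‖²) = 2⟪A, ∂ₜ²u + (∂_θ + α)²u⟫ - 2 ∂_θ⟪B, A⟫`. The last term
integrates to zero over a period, and by the orthogonality hypothesis the first one is `2⟪A, f⟫`,
so `|e'(s)| ≤ 2 M ∫ ‖f(s, ·)‖`; integrating from `0` to `t` gives the estimate.
-/

open Real MeasureTheory Set
open scoped Matrix RealInnerProductSpace

/-- The action of a `K × K` real matrix on `ℝ^K` (with the Euclidean norm). -/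
noncomputable def matAct {K : ℕ} (α : Matrix (Fin K) (Fin K) ℝ)
    (x : EuclideanSpace ℝ (Fin K)) : EuclideanSpace ℝ (Fin K) :=
  Matrix.toEuclideanLin α x

theorem Matrix.inner_toEuclideanLin_of_transpose_eq_neg {n : Type*} [Fintype n] [DecidableEq n]
    {α : Matrix n n ℝ} (hα : αᵀ = -α) (x y : EuclideanSpace ℝ n) :
    ⟪α.toEuclideanLin x, y⟫ = -⟪x, α.toEuclideanLin y⟫ := by
  rw [← LinearMap.adjoint_inner_right, ← Matrix.toEuclideanLin_conjTranspose_eq_adjoint,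
    Matrix.conjTranspose_eq_transpose_of_trivial, hα, map_neg, LinearMap.neg_apply, inner_neg_right]

theorem Function.Periodic.deriv {E : Type*} [NormedAddCommGroup E] [NormedSpace ℝ E]
    {f : ℝ → E} {c : ℝ} (hf : f.Periodic c) : (deriv f).Periodic c := fun x => by
  rw [← deriv_comp_add_const, funext hf]

section PartialDerivatives

variable {F : Type*} [NormedAddCommGroup F] [NormedSpace ℝ F] {u : ℝ → ℝ → F}

noncomputable def partialFst (u : ℝ → ℝ → F) (t θ : ℝ) : F := deriv (fun s => u s θ) t

noncomputable def partialSnd (u : ℝ → ℝ → F) (t θ : ℝ) : F := deriv (u t) θ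

theorem partialFst_eq_fderiv {t θ : ℝ} (hu : DifferentiableAt ℝ (Function.uncurry u) (t, θ)) :
    partialFst u t θ = fderiv ℝ (Function.uncurry u) (t, θ) (1, 0) := by
  have hcurve : HasDerivAt (fun s : ℝ => (s, θ)) ((1 : ℝ), (0 : ℝ)) t :=
    (hasDerivAt_id t).prodMk (hasDerivAt_const t θ)
  exact (hu.hasFDerivAt.comp_hasDerivAt t hcurve).deriv

theorem partialSnd_eq_fderiv {t θ : ℝ} (hu : DifferentiableAt ℝ (Function.uncurry u) (t, θ)) :
    partialSnd u t θ = fderiv ℝ (Function.uncurry u) (t, θ) (0, 1) := by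
  have hcurve : HasDerivAt (fun y : ℝ => (t, y)) ((0 : ℝ), (1 : ℝ)) θ :=
    (hasDerivAt_const θ t).prodMk (hasDerivAt_id θ)
  exact (hu.hasFDerivAt.comp_hasDerivAt θ hcurve).deriv

theorem hasDerivAt_partialFst {t θ : ℝ} (hu : DifferentiableAt ℝ (Function.uncurry u) (t, θ)) :
    HasDerivAt (fun s => u s θ) (partialFst u t θ) t :=
  (DifferentiableAt.comp (g := Function.uncurry u) (f := fun s => (s, θ)) t hu
    (by fun_prop)).hasDerivAt

theorem hasDerivAt_partialSnd {t θ : ℝ} (hu : DifferentiableAt ℝ (Function.uncurry u) (t, θ)) :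
    HasDerivAt (u t) (partialSnd u t θ) θ :=
  (DifferentiableAt.comp (g := Function.uncurry u) (f := fun y => (t, y)) θ hu
    (by fun_prop)).hasDerivAt

theorem uncurry_partialFst_eq (hu : Differentiable ℝ (Function.uncurry u)) :
    Function.uncurry (partialFst u) = fun p => fderiv ℝ (Function.uncurry u) p (1, 0) :=
  funext fun p => partialFst_eq_fderiv (hu p)

theorem uncurry_partialSnd_eq (hu : Differentiable ℝ (Function.uncurry u)) :
    Function.uncurry (partialSnd u) = fun p => fderiv ℝ (Function.uncurry u) p (0, 1) :=
  funext fun p => partialSnd_eq_fderiv (hu p)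

theorem ContDiff.uncurry_partialFst {m n : WithTop ℕ∞} (hu : ContDiff ℝ n (Function.uncurry u))
    (hmn : m + 1 ≤ n) : ContDiff ℝ m (Function.uncurry (partialFst u)) := by
  rw [uncurry_partialFst_eq (hu.differentiable (by rintro rfl; simp at hmn))]
  exact (hu.fderiv_right hmn).clm_apply contDiff_const

theorem ContDiff.uncurry_partialSnd {m n : WithTop ℕ∞} (hu : ContDiff ℝ n (Function.uncurry u))
    (hmn : m + 1 ≤ n) : ContDiff ℝ m (Function.uncurry (partialSnd u)) := by
  rw [uncurry_partialSnd_eq (hu.differentiable (by rintro rfl; simp at hmn))]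
  exact (hu.fderiv_right hmn).clm_apply contDiff_const

theorem partialSnd_partialFst (hu : ContDiff ℝ 2 (Function.uncurry u)) (t θ : ℝ) :
    partialSnd (partialFst u) t θ = partialFst (partialSnd u) t θ := by
  have hu' : Differentiable ℝ (Function.uncurry u) := hu.differentiable two_ne_zero
  have hD : Differentiable ℝ (fderiv ℝ (Function.uncurry u)) :=
    (hu.fderiv_right (m := 1) le_rfl).differentiable one_ne_zero
  have hslice : ∀ v w : ℝ × ℝ, fderiv ℝ (fun p => fderiv ℝ (Function.uncurry u) p v) (t, θ) w =
      fderiv ℝ (fderiv ℝ (Function.uncurry u)) (t, θ) w v := fun v w => by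
    rw [fderiv_clm_apply (hD _) (differentiableAt_const v)]
    simp
  have h₁ := (hu.uncurry_partialFst (m := 1) le_rfl).differentiable one_ne_zero (t, θ)
  have h₂ := (hu.uncurry_partialSnd (m := 1) le_rfl).differentiable one_ne_zero (t, θ)
  rw [partialSnd_eq_fderiv h₁, partialFst_eq_fderiv h₂, uncurry_partialFst_eq hu',
    uncurry_partialSnd_eq hu', hslice, hslice]
  exact hu.contDiffAt.isSymmSndFDerivAt (by simp) _ _

theorem partialFst_periodic {c : ℝ} (huper : ∀ t, (u t).Periodic c) (t : ℝ) :
    (partialFst u t).Periodic c := fun θ => by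
  simp only [partialFst, huper _ θ]

theorem partialSnd_periodic {c : ℝ} (huper : ∀ t, (u t).Periodic c) (t : ℝ) :
    (partialSnd u t).Periodic c :=
  (huper t).deriv

end PartialDerivatives

theorem hasDerivAt_intervalIntegral_of_contDiff {F : Type*} [NormedAddCommGroup F]
    [NormedSpace ℝ F] [CompleteSpace F] {G : ℝ → ℝ → F} (hG : ContDiff ℝ 1 (Function.uncurry G))
    (a b t : ℝ) :
    HasDerivAt (fun s => ∫ θ in a..b, G s θ) (∫ θ in a..b, partialFst G t θ) t := by
  have hG' : Continuous (Function.uncurry (partialFst G)) :=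
    (hG.uncurry_partialFst (m := 0) le_rfl).continuous
  obtain ⟨C, hC⟩ := ((isCompact_closedBall t 1).prod isCompact_uIcc).exists_bound_of_continuousOn
    hG'.continuousOn
  refine (intervalIntegral.hasDerivAt_integral_of_dominated_loc_of_deriv_le
    (bound := fun _ => C) (Metric.closedBall_mem_nhds t one_pos)
    (.of_forall fun s => (hG.continuous.comp (.prodMk_right s)).aestronglyMeasurable)
    ((hG.continuous.comp (.prodMk_right t)).intervalIntegrable a b)
    (hG'.comp (.prodMk_right t)).aestronglyMeasurable
    (.of_forall fun θ hθ s hs => hC (s, θ) ⟨hs, uIoc_subset_uIcc hθ⟩)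
    intervalIntegrable_const
    (.of_forall fun θ _ s _ => hasDerivAt_partialFst
      ((hG.differentiable one_ne_zero) (s, θ)))).2

theorem Function.Periodic.intervalIntegral_deriv_eq_zero {h h' : ℝ → ℝ} {c : ℝ}
    (hper : h.Periodic c) (hderiv : ∀ x, HasDerivAt h (h' x) x)
    (hint : IntervalIntegrable h' volume 0 c) :
    ∫ x in 0..c, h' x = 0 := by
  rw [intervalIntegral.integral_eq_sub_of_hasDerivAt (fun x _ => hderiv x) hint, sub_eq_zero]
  simpa using hper 0

theorem abs_sub_le_integral_of_abs_deriv_le {e e' b : ℝ → ℝ} {t : ℝ}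
    (he : ∀ s ∈ uIcc 0 t, HasDerivAt e (e' s) s) (he' : IntervalIntegrable e' volume 0 t)
    (hb : IntervalIntegrable b volume (-|t|) |t|) (hb₀ : ∀ s ∈ Ioc (-|t|) |t|, 0 ≤ b s)
    (hle : ∀ s ∈ uIcc 0 t, |e' s| ≤ b s) :
    |e t - e 0| ≤ ∫ s in (-|t|)..|t|, b s := by
  have hsub : uIoc 0 t ⊆ Ioc (-|t|) |t| := by
    rw [uIoc_eq_union]
    rintro s (hs | hs) <;> constructor <;> cases hs <;> cases abs_cases t <;> linarith
  have hbI : IntegrableOn b (Ioc (-|t|) |t|) := (intervalIntegrable_iff_integrableOn_Ioc_of_le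
    (neg_le_self (abs_nonneg t))).1 hb
  rw [← intervalIntegral.integral_eq_sub_of_hasDerivAt he he', ← Real.norm_eq_abs,
    intervalIntegral.integral_of_le (neg_le_self (abs_nonneg t))]
  calc ‖∫ s in 0..t, e' s‖ ≤ ∫ s in uIoc 0 t, ‖e' s‖ :=
        intervalIntegral.norm_integral_le_integral_norm_uIoc
    _ ≤ ∫ s in uIoc 0 t, b s := setIntegral_mono_on he'.def'.norm (hbI.mono_set hsub)
        measurableSet_uIoc fun s hs => hle s (uIoc_subset_uIcc hs)
    _ ≤ ∫ s in Ioc (-|t|) |t|, b s := setIntegral_mono_set hbI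
        ((ae_restrict_iff' measurableSet_Ioc).2 (.of_forall hb₀)) hsub.eventuallyLE

theorem abs_intervalIntegral_inner_le {E : Type*} [NormedAddCommGroup E] [InnerProductSpace ℝ E]
    {g h : ℝ → E} {a b M : ℝ} (hab : a ≤ b) (hh : IntervalIntegrable (fun x => ‖h x‖) volume a b)
    (hg : ∀ x ∈ Ioc a b, ‖g x‖ ≤ M) :
    |∫ x in a..b, ⟪g x, h x⟫| ≤ M * ∫ x in a..b, ‖h x‖ := by
  rw [← Real.norm_eq_abs, ← intervalIntegral.integral_const_mul M]
  refine intervalIntegral.norm_integral_le_of_norm_le hab (.of_forall fun x hx => ?_)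
    (hh.const_mul M)
  exact (abs_real_inner_le_norm _ _).trans
    (mul_le_mul_of_nonneg_right (hg x hx) (norm_nonneg _))

section TwistedEnergy

variable {E : Type*} [NormedAddCommGroup E] [InnerProductSpace ℝ E] (L : E →L[ℝ] E)
  {u : ℝ → ℝ → E}

noncomputable def covPartialSnd (u : ℝ → ℝ → E) (t θ : ℝ) : E := partialSnd u t θ + L (u t θ)

noncomputable def energyDensityDiff (u : ℝ → ℝ → E) (t θ : ℝ) : ℝ :=
  ‖partialFst u t θ‖ ^ 2 - ‖covPartialSnd L u t θ‖ ^ 2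

noncomputable def angularFlux (u : ℝ → ℝ → E) (t θ : ℝ) : ℝ :=
  ⟪covPartialSnd L u t θ, partialFst u t θ⟫

-- `∂ₜ²u + (∂_θ + L)²u`, bracketed as in the orthogonality hypothesis of the main theorem.
noncomputable def twistedLaplacian (u : ℝ → ℝ → E) (t θ : ℝ) : E :=
  partialFst (partialFst u) t θ
    + (partialSnd (partialSnd u) t θ + (2 : ℝ) • L (partialSnd u t θ) + L (L (u t θ)))

theorem ContDiff.uncurry_covPartialSnd {m n : WithTop ℕ∞} (hu : ContDiff ℝ n (Function.uncurry u))
    (hmn : m + 1 ≤ n) : ContDiff ℝ m (Function.uncurry (covPartialSnd L u)) :=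
  (hu.uncurry_partialSnd hmn).add (L.contDiff.comp (hu.of_le (le_self_add.trans hmn)))

-- Read `a = ∂ₜu`, `a₁ = ∂ₜ²u`, `a₂ = ∂_θ∂ₜu`, `v = ∂_θu`, `w = ∂_θ²u`, `x = u`.
theorem twisted_energy_identity (hL : ∀ x y, ⟪L x, y⟫ = -⟪x, L y⟫) (a a₁ a₂ v w x : E) :
    2 * ⟪a, a₁⟫ - 2 * ⟪v + L x, a₂ + L a⟫
      = 2 * ⟪a, a₁ + (w + (2 : ℝ) • L v + L (L x))⟫ - 2 * (⟪v + L x, a₂⟫ + ⟪w + L v, a⟫) := by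
  simp only [inner_add_left, inner_add_right, real_inner_smul_right]
  linarith [hL v a, hL (L x) a, real_inner_comm a (L v), real_inner_comm a (L (L x)),
    real_inner_comm a w]

theorem hasDerivAt_angularFlux (hu : ContDiff ℝ 2 (Function.uncurry u)) (t θ : ℝ) :
    HasDerivAt (angularFlux L u t)
      (⟪covPartialSnd L u t θ, partialSnd (partialFst u) t θ⟫
        + ⟪partialSnd (partialSnd u) t θ + L (partialSnd u t θ), partialFst u t θ⟫) θ := by
  have hB : HasDerivAt (covPartialSnd L u t)
      (partialSnd (partialSnd u) t θ + L (partialSnd u t θ)) θ :=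
    (hasDerivAt_partialSnd ((hu.uncurry_partialSnd le_rfl).differentiable one_ne_zero _)).add
      (L.hasFDerivAt.comp_hasDerivAt θ
        (hasDerivAt_partialSnd (hu.differentiable two_ne_zero _)))
  exact hB.inner ℝ
    (hasDerivAt_partialSnd ((hu.uncurry_partialFst le_rfl).differentiable one_ne_zero _))

theorem hasDerivAt_energyDensityDiff (hL : ∀ x y, ⟪L x, y⟫ = -⟪x, L y⟫)
    (hu : ContDiff ℝ 2 (Function.uncurry u)) (t θ : ℝ) :
    HasDerivAt (fun s => energyDensityDiff L u s θ)
      (2 * ⟪partialFst u t θ, twistedLaplacian L u t θ⟫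
        - 2 * partialSnd (angularFlux L u) t θ) t := by
  have hA : HasDerivAt (fun s => partialFst u s θ) (partialFst (partialFst u) t θ) t :=
    hasDerivAt_partialFst ((hu.uncurry_partialFst le_rfl).differentiable one_ne_zero _)
  have hB : HasDerivAt (fun s => covPartialSnd L u s θ)
      (partialSnd (partialFst u) t θ + L (partialFst u t θ)) t := by
    rw [partialSnd_partialFst hu]
    exact (hasDerivAt_partialFst ((hu.uncurry_partialSnd le_rfl).differentiable one_ne_zero _)).add
      (L.hasFDerivAt.comp_hasDerivAt t (hasDerivAt_partialFst (hu.differentiable two_ne_zero _)))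
  rw [partialSnd, (hasDerivAt_angularFlux L hu t θ).deriv, twistedLaplacian, covPartialSnd,
    ← twisted_energy_identity L hL]
  exact hA.norm_sq.sub hB.norm_sq

theorem hasDerivAt_integral_energyDensityDiff (hL : ∀ x y, ⟪L x, y⟫ = -⟪x, L y⟫)
    (hu : ContDiff ℝ 2 (Function.uncurry u)) {c : ℝ} (huper : ∀ t, (u t).Periodic c) (t : ℝ) :
    HasDerivAt (fun s => ∫ θ in 0..c, energyDensityDiff L u s θ)
      (2 * ∫ θ in 0..c, ⟪partialFst u t θ, twistedLaplacian L u t θ⟫) t := by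
  have hG : ContDiff ℝ 1 (Function.uncurry (energyDensityDiff L u)) :=
    ((hu.uncurry_partialFst le_rfl).norm_sq ℝ).sub ((hu.uncurry_covPartialSnd L le_rfl).norm_sq ℝ)
  have hF : ContDiff ℝ 1 (Function.uncurry (angularFlux L u)) :=
    (hu.uncurry_covPartialSnd L le_rfl).inner ℝ (hu.uncurry_partialFst le_rfl)
  have hG' : IntervalIntegrable (partialFst (energyDensityDiff L u) t) volume 0 c :=
    ((hG.uncurry_partialFst (m := 0) le_rfl).continuous.comp
      (.prodMk_right t)).intervalIntegrable _ _
  have hF' : IntervalIntegrable (partialSnd (angularFlux L u) t) volume 0 c :=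
    ((hF.uncurry_partialSnd (m := 0) le_rfl).continuous.comp
      (.prodMk_right t)).intervalIntegrable _ _
  have hFper : (angularFlux L u t).Periodic c := fun θ => by
    simp only [angularFlux, covPartialSnd, partialFst_periodic huper t θ,
      partialSnd_periodic huper t θ, huper t θ]
  have hFzero : ∫ θ in 0..c, partialSnd (angularFlux L u) t θ = 0 :=
    hFper.intervalIntegral_deriv_eq_zero
      (fun θ => hasDerivAt_partialSnd (hF.differentiable one_ne_zero _)) hF'
  refine (hasDerivAt_intervalIntegral_of_contDiff hG 0 c t).congr_deriv ?_
  calc ∫ θ in 0..c, partialFst (energyDensityDiff L u) t θ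
      = ∫ θ in 0..c, (partialFst (energyDensityDiff L u) t θ
          + 2 * partialSnd (angularFlux L u) t θ) := by
        rw [intervalIntegral.integral_add hG' (hF'.const_mul 2),
          intervalIntegral.integral_const_mul, hFzero, mul_zero, add_zero]
    _ = 2 * ∫ θ in 0..c, ⟪partialFst u t θ, twistedLaplacian L u t θ⟫ := by
        rw [← intervalIntegral.integral_const_mul]
        refine intervalIntegral.integral_congr fun θ _ => ?_
        rw [partialFst, (hasDerivAt_energyDensityDiff L hL hu t θ).deriv]
        ring

end TwistedEnergy

theorem radial_angular_energy_difference_general (K : ℕ)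
    (α : Matrix (Fin K) (Fin K) ℝ) (hα : αᵀ = -α) (T : ℝ)
    (u f : ℝ → ℝ → EuclideanSpace ℝ (Fin K))
    (hu : ContDiff ℝ 2 (Function.uncurry u))
    (hf : Continuous (Function.uncurry f))
    (huper : ∀ t : ℝ, Function.Periodic (u t) (2 * Real.pi))
    (horth : ∀ t ∈ Icc (-T) T, ∀ θ : ℝ,
      ⟪deriv (fun s => u s θ) t,
        deriv (deriv fun s => u s θ) t
          + (deriv (deriv (u t)) θ + (2 : ℝ) • matAct α (deriv (u t) θ)
              + matAct α (matAct α (u t θ)))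
          - f t θ⟫ = 0)
    (M : ℝ)
    (hM : ∀ t ∈ Icc (-T) T, ∀ θ : ℝ,
      Real.sqrt (‖deriv (fun s => u s θ) t‖ ^ 2
        + ‖deriv (u t) θ + matAct α (u t θ)‖ ^ 2) ≤ M) :
    ∀ t ∈ Icc (-T) T,
      |(∫ θ in (0:ℝ)..(2 * Real.pi),
          (‖deriv (fun s => u s θ) t‖ ^ 2 - ‖deriv (u t) θ + matAct α (u t θ)‖ ^ 2))
        - ∫ θ in (0:ℝ)..(2 * Real.pi),
          (‖deriv (fun s => u s θ) 0‖ ^ 2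
            - ‖deriv (u 0) θ + matAct α (u 0 θ)‖ ^ 2)|
      ≤ 2 * M * ∫ s in (-|t|)..|t|, ∫ θ in (0:ℝ)..(2 * Real.pi), ‖f s θ‖ := by
  intro t ht
  let L := LinearMap.toContinuousLinearMap (Matrix.toEuclideanLin α)
  have hL : ∀ x y, ⟪L x, y⟫ = -⟪x, L y⟫ := Matrix.inner_toEuclideanLin_of_transpose_eq_neg hα
  have h0 : (0 : ℝ) ∈ Icc (-T) T := ⟨by linarith [ht.1, ht.2], by linarith [ht.1, ht.2]⟩
  have hstrip : uIcc 0 t ⊆ Icc (-T) T := uIcc_subset_Icc h0 ht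
  have hM₀ : 0 ≤ M := (Real.sqrt_nonneg _).trans (hM t ht 0)
  -- `horth s _ θ` unfolds to `⟪partialFst u s θ, twistedLaplacian L u s θ - f s θ⟫ = 0`.
  have hderiv : ∀ s ∈ uIcc 0 t, HasDerivAt (fun s => ∫ θ in 0..2 * π, energyDensityDiff L u s θ)
      (2 * ∫ θ in 0..2 * π, ⟪partialFst u s θ, f s θ⟫) s := fun s hs =>
    (hasDerivAt_integral_energyDensityDiff L hL hu huper s).congr_deriv <|
      congrArg _ <| intervalIntegral.integral_congr fun θ _ =>
        sub_eq_zero.1 ((inner_sub_right _ _ _).symm.trans (horth s (hstrip hs) θ))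
  have hbound : ∀ s ∈ uIcc 0 t, |2 * ∫ θ in 0..2 * π, ⟪partialFst u s θ, f s θ⟫|
      ≤ 2 * M * ∫ θ in 0..2 * π, ‖f s θ‖ := fun s hs => by
    rw [abs_mul, abs_two, mul_assoc]
    refine mul_le_mul_of_nonneg_left (abs_intervalIntegral_inner_le (by positivity)
      ((hf.norm.comp (.prodMk_right s)).intervalIntegrable _ _) fun θ _ => ?_) zero_le_two
    exact ((Real.le_sqrt (norm_nonneg _) (by positivity)).2
      (le_add_of_nonneg_right (sq_nonneg _))).trans (hM s (hstrip hs) θ)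
  have hpower : Continuous fun s => ∫ θ in 0..2 * π, ⟪partialFst u s θ, f s θ⟫ :=
    intervalIntegral.continuous_parametric_intervalIntegral_of_continuous'
      ((hu.uncurry_partialFst (m := 1) le_rfl).continuous.inner hf) 0 (2 * π)
  have hforce : Continuous fun s => ∫ θ in 0..2 * π, ‖f s θ‖ :=
    intervalIntegral.continuous_parametric_intervalIntegral_of_continuous' hf.norm 0 (2 * π)
  rw [← intervalIntegral.integral_const_mul]
  exact abs_sub_le_integral_of_abs_deriv_le hderiv
    ((hpower.const_mul 2).intervalIntegrable _ _) ((hforce.const_mul _).intervalIntegrable _ _)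
    (fun s _ => mul_nonneg (by positivity)
      (intervalIntegral.integral_nonneg (by positivity) fun θ _ => norm_nonneg _)) hbound

/-- Lemma 4.13: the difference `e(t)` of radial and angular energy densities is
almost constant along the cylinder. -/
theorem radial_angular_energy_difference (K : ℕ) (hK : 0 < K)
    (α : Matrix (Fin K) (Fin K) ℝ) (hα : αᵀ = -α) (T : ℝ) (hT : 0 < T)
    (u f : ℝ → ℝ → EuclideanSpace ℝ (Fin K))
    (hu : ContDiff ℝ 2 (Function.uncurry u))
    (hf : Continuous (Function.uncurry f))
    (huper : ∀ t : ℝ, Function.Periodic (u t) (2 * Real.pi))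
    (hfper : ∀ t : ℝ, Function.Periodic (f t) (2 * Real.pi))
    (horth : ∀ t ∈ Icc (-T) T, ∀ θ : ℝ,
      ⟪deriv (fun s => u s θ) t,
        deriv (deriv fun s => u s θ) t
          + (deriv (deriv (u t)) θ + (2 : ℝ) • matAct α (deriv (u t) θ)
              + matAct α (matAct α (u t θ)))
          - f t θ⟫ = 0)
    (M : ℝ)
    (hM : ∀ t ∈ Icc (-T) T, ∀ θ : ℝ,
      Real.sqrt (‖deriv (fun s => u s θ) t‖ ^ 2
        + ‖deriv (u t) θ + matAct α (u t θ)‖ ^ 2) ≤ M) :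
    ∀ t ∈ Icc (-T) T,
      |(∫ θ in (0:ℝ)..(2 * Real.pi),
          (‖deriv (fun s => u s θ) t‖ ^ 2 - ‖deriv (u t) θ + matAct α (u t θ)‖ ^ 2))
        - ∫ θ in (0:ℝ)..(2 * Real.pi),
          (‖deriv (fun s => u s θ) 0‖ ^ 2
            - ‖deriv (u 0) θ + matAct α (u 0 θ)‖ ^ 2)|
      ≤ 2 * M * ∫ s in (-|t|)..|t|, ∫ θ in (0:ℝ)..(2 * Real.pi), ‖f s θ‖ :=
  radial_angular_energy_difference_general K α hα T u f hu hf huper horth M hM
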